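/- Consider the toggle-switch dynamics on a directed graph where every vertex has out-degree exactly 2, started at vertex s. If the token visits s infinitely often, then every vertex reachable from s (in the underlying directed graph where v has edges to both succ0(v) and succ1(v)) is visited infinitely often by the token. -/
import Mathlib


/-- The toggle-switch dynamics. -/
def toggleStep {V : Type*} [DecidableEq V] (succ0 succ1 : V → V) :
    V × (V → Bool) → V × (V → Bool) :=
  fun p => ((if p.2 p.1 then succ1 p.1 else succ0 p.1),
            Function.update p.2 p.1 (!p.2 p.1))

section Aux

variable {V : Type*} [DecidableEq V] (succ0 succ1 : V → V)

lemma toggle_pos_succ (p : V × (V → Bool)) :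
    (toggleStep succ0 succ1 p).1 = if p.2 p.1 then succ1 p.1 else succ0 p.1 := rfl

lemma toggle_bit_succ (p : V × (V → Bool)) (w : V) :
    (toggleStep succ0 succ1 p).2 w = if p.1 = w then !p.2 w else p.2 w := by
  simp only [toggleStep, Function.update_apply]
  rcases eq_or_ne p.1 w with h | h
  · simp [h]
  · simp [h, Ne.symm h]

lemma bit_const (w : V) (p0 : V × (V → Bool)) {n m : ℕ} (h : n ≤ m)
    (hnv : ∀ k, n ≤ k → k < m → ((toggleStep succ0 succ1)^[k] p0).1 ≠ w) :
    ((toggleStep succ0 succ1)^[m] p0).2 w = ((toggleStep succ0 succ1)^[n] p0).2 w := by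
  induction m with
  | zero =>
    obtain rfl : n = 0 := by omega
    rfl
  | succ m ih =>
    rcases Nat.lt_or_ge n (m + 1) with h1 | h2
    · have hn : n ≤ m := by omega
      rw [Function.iterate_succ_apply', toggle_bit_succ,
        if_neg (hnv m hn (by omega))]
      exact ih hn (fun k hk1 hk2 => hnv k hk1 (by omega))
    · obtain rfl : n = m + 1 := by omega
      rfl

lemma key (s : V) (w : V) (c : Bool)
    (hw : ∀ N, ∃ n > N, ((toggleStep succ0 succ1)^[n] (s, fun _ => false)).1 = w) :
    ∀ N, ∃ n > N, ((toggleStep succ0 succ1)^[n] (s, fun _ => false)).1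
      = (if c then succ1 w else succ0 w) := by
  classical
  intro N
  obtain ⟨n, hn, hpos⟩ := hw N
  set p0 : V × (V → Bool) := (s, fun _ => false) with hp0
  by_cases hb : ((toggleStep succ0 succ1)^[n] p0).2 w = c
  · refine ⟨n + 1, by omega, ?_⟩
    rw [Function.iterate_succ_apply', toggle_pos_succ, hpos, hb]
  · have hb' : ((toggleStep succ0 succ1)^[n] p0).2 w = !c := by
      cases c <;> simp_all
    have hb1 : ((toggleStep succ0 succ1)^[n + 1] p0).2 w = c := by
      rw [Function.iterate_succ_apply', toggle_bit_succ, if_pos hpos, hb',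
        Bool.not_not]
    have hex : ∃ m, m > n ∧ ((toggleStep succ0 succ1)^[m] p0).1 = w := hw n
    set m := Nat.find hex with hm
    obtain ⟨hmn, hmw⟩ := Nat.find_spec hex
    have hbm : ((toggleStep succ0 succ1)^[m] p0).2 w = c := by
      rw [bit_const succ0 succ1 w p0 (show n + 1 ≤ m by omega) ?_, hb1]
      intro k hk1 hk2 hkw
      exact Nat.find_min hex hk2 ⟨by omega, hkw⟩
    refine ⟨m + 1, by omega, ?_⟩
    rw [Function.iterate_succ_apply', toggle_pos_succ, hmw, hbm]

end Aux

/-- if the token started at `s` visits `s` infinitely often, then every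
vertex reachable from `s` (in the graph with edges `v → succ0 v` and `v → succ1 v`)
is visited infinitely often. -/
theorem stmt3 {V : Type*} [DecidableEq V] (succ0 succ1 : V → V) (s : V)
    (hvisit : ∀ N, ∃ n > N,
      ((toggleStep succ0 succ1)^[n] (s, fun _ => false)).1 = s)
    (v : V)
    (hreach : Relation.ReflTransGen (fun a b => b = succ0 a ∨ b = succ1 a) s v) :
    ∀ N, ∃ n > N,
      ((toggleStep succ0 succ1)^[n] (s, fun _ => false)).1 = v := by
  induction hreach with
  | refl => exact hvisit
  | @tail w v _ h2 ih =>
    rcases h2 with h | h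
    · subst h; simpa using key succ0 succ1 s w false ih
    · subst h; simpa using key succ0 succ1 s w true ih
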